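/- arXiv:1309.5022 — 4 statements merged into one kernel-verified Lean document; each statement's English description precedes it below -/
import Mathlib

section
/- Let f : ℝ^n → ℂ be a trigonometric polynomial of degree at most m, i.e. f(φ) = Σ_{s∈S} f_s e^{i s·φ} for a finite set S ⊂ ℤ^n with |s|₁ ≤ m for all s ∈ S. Then (1/T) ∫₀^T f(φ + tW) dt converges, as T → ∞, to the resonant average ⟨f⟩_W(φ) = ∫_{[0,2π]^{n−r}} f(φ + Σ_{j=r+1}^n θ_j η^j) ∏_{j=r+1}^n dθ_j/(2π), uniformly in φ ∈ ℝ^n. -/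
/-! Expand `f` into characters `e^{i s·φ}`. Along the line `φ + tW` a character is
`e^{i s·φ} e^{i t (s·W)}`, whose time average tends to `e^{i s·φ}` if `s·W = 0` and to `0`
otherwise, with an error independent of `φ` because `|e^{i s·φ}| = 1`. The torus average keeps
exactly the characters with `s·η^j = 0` for all `j > r`; these numbers are integers because `R` is
unimodular. As the `η^j` form the dual basis of the `ζ^j`, they vanish exactly when `s ∈ 𝒜^R`,
which for `|s|₁ ≤ m` is equivalent to `s·W = 0`. -/

open MeasureTheory Filter Complex Topology Matrix

theorem tendsto_average_integral_exp_I_mul (a : ℝ) :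
    Tendsto (fun T : ℝ => (1 / T : ℂ) * ∫ t in (0:ℝ)..T, exp (I * ↑(t * a))) atTop
      (𝓝 (if a = 0 then 1 else 0)) := by
  rcases eq_or_ne a 0 with rfl | ha
  · refine tendsto_const_nhds.congr' ?_
    filter_upwards [eventually_ne_atTop 0] with T hT
    simp [hT]
  have hc : I * a ≠ 0 := mul_ne_zero I_ne_zero (ofReal_ne_zero.2 ha)
  have hbdd : ∀ T : ℝ, ‖∫ t in (0:ℝ)..T, exp (I * ↑(t * a))‖ ≤ 2 / ‖I * a‖ := by
    intro T
    have hlin : ∀ t : ℝ, I * ↑(t * a) = I * a * t := fun t => by push_cast; ring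
    simp_rw [hlin]
    rw [integral_exp_mul_complex hc, norm_div]
    gcongr
    refine (norm_sub_le _ _).trans_eq ?_
    simp_rw [mul_assoc, ← ofReal_mul, norm_exp_I_mul_ofReal]
    norm_num
  have hinv : Tendsto (fun T : ℝ => (1 / T : ℂ)) atTop (𝓝 0) := by
    simpa [Function.comp_def] using (continuous_ofReal.tendsto 0).comp tendsto_inv_atTop_zero
  rw [if_neg ha]
  exact hinv.zero_mul_isBoundedUnder_le ⟨_, eventually_map.2 (Eventually.of_forall hbdd)⟩

theorem integral_Icc_exp_I_mul_int (b : ℤ) :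
    ∫ θ in Set.Icc (0:ℝ) (2 * Real.pi), exp (I * ↑(θ * b)) =
      if b = 0 then ((2 * Real.pi : ℝ) : ℂ) else 0 := by
  rw [integral_Icc_eq_integral_Ioc, ← intervalIntegral.integral_of_le (by positivity)]
  rcases eq_or_ne b 0 with rfl | hb
  · simp
  have hc : I * b ≠ 0 := mul_ne_zero I_ne_zero (by exact_mod_cast hb)
  have hperiod : exp (I * b * ↑(2 * Real.pi)) = 1 := by
    rw [← exp_int_mul_two_pi_mul_I b]
    push_cast
    ring_nf
  have hlin : ∀ θ : ℝ, I * ↑(θ * b) = I * b * θ := fun θ => by push_cast; ring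
  simp_rw [hlin]
  rw [integral_exp_mul_complex hc, hperiod, if_neg hb]
  simp

theorem setIntegral_univ_pi_prod {ι 𝕜 : Type*} [Fintype ι] [RCLike 𝕜] (s : Set ℝ)
    (g : ι → ℝ → 𝕜) :
    ∫ x in Set.univ.pi (fun _ : ι => s), ∏ i, g i (x i) = ∏ i, ∫ t in s, g i t := by
  rw [volume_pi, Measure.restrict_pi_pi, integral_fintype_prod_eq_prod]

theorem average_cube_exp_I_mul_int {ι : Type*} [Fintype ι] (b : ι → ℤ) :
    (((2 * Real.pi) ^ Fintype.card ι)⁻¹ : ℝ) •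
        ∫ θ in Set.univ.pi (fun _ : ι => Set.Icc (0:ℝ) (2 * Real.pi)),
          exp (I * ↑(∑ i, θ i * b i)) = if b = 0 then 1 else 0 := by
  simp_rw [ofReal_sum, Finset.mul_sum, exp_sum]
  rw [setIntegral_univ_pi_prod _ fun i t => exp (I * ↑(t * b i))]
  simp_rw [integral_Icc_exp_I_mul_int, Fintype.prod_ite_zero, funext_iff, Pi.zero_apply]
  split_ifs
  · rw [Finset.prod_const, Finset.card_univ, real_smul, ← ofReal_pow, ← ofReal_mul,
      inv_mul_cancel₀ (by positivity), ofReal_one]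
  · simp

theorem tendstoUniformly_finsetSum_mul {ι α β 𝕜 : Type*} [NormedRing 𝕜] {l : Filter α}
    (S : Finset ι) {g : ι → β → 𝕜} (hg : ∀ s φ, ‖g s φ‖ ≤ 1) {u : ι → α → 𝕜} {L : ι → 𝕜}
    (hu : ∀ s ∈ S, Tendsto (u s) l (𝓝 (L s))) :
    TendstoUniformly (fun T φ => ∑ s ∈ S, g s φ * u s T) (fun φ => ∑ s ∈ S, g s φ * L s) l := by
  have hsum : Tendsto (fun T => ∑ s ∈ S, ‖L s - u s T‖) l (𝓝 0) := by
    simpa using tendsto_finsetSum S fun s hs => ((hu s hs).const_sub (L s)).norm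
  rw [Metric.tendstoUniformly_iff]
  intro ε hε
  filter_upwards [hsum.eventually_lt_const hε] with T hT φ
  rw [dist_eq_norm, ← Finset.sum_sub_distrib]
  calc ‖∑ s ∈ S, (g s φ * L s - g s φ * u s T)‖ ≤ ∑ s ∈ S, ‖L s - u s T‖ := by
        refine (norm_sum_le _ _).trans (Finset.sum_le_sum fun s _ => ?_)
        rw [← mul_sub]
        exact (norm_mul_le _ _).trans (mul_le_of_le_one_left (norm_nonneg _) (hg s φ))
    _ < ε := hT

noncomputable def trigPoly {ι κ : Type*} [Fintype ι] (S : Finset κ) (c : κ → ℂ) (ξ : κ → ι → ℝ)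
    (x : ι → ℝ) : ℂ :=
  ∑ s ∈ S, c s * exp (I * ↑(ξ s ⬝ᵥ x))

section trigPoly
variable {ι κ : Type*} [Fintype ι] (S : Finset κ) (c : κ → ℂ) (ξ : κ → ι → ℝ)

theorem average_integral_trigPoly_add_smul (φ W : ι → ℝ) (T : ℝ) :
    (1 / T : ℂ) * ∫ t in (0:ℝ)..T, trigPoly S c ξ (φ + t • W) =
      ∑ s ∈ S, exp (I * ↑(ξ s ⬝ᵥ φ)) *
        (c s * ((1 / T : ℂ) * ∫ t in (0:ℝ)..T, exp (I * ↑(t * (ξ s ⬝ᵥ W))))) := by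
  have hsplit : ∀ s t, exp (I * ↑(ξ s ⬝ᵥ (φ + t • W))) =
      exp (I * ↑(ξ s ⬝ᵥ φ)) * exp (I * ↑(t * (ξ s ⬝ᵥ W))) := fun s t => by
    rw [dotProduct_add, dotProduct_smul, smul_eq_mul, ofReal_add, mul_add, exp_add]
  simp_rw [trigPoly, hsplit]
  rw [intervalIntegral.integral_finsetSum fun s _ =>
    (by fun_prop : Continuous _).intervalIntegrable _ _, Finset.mul_sum]
  refine Finset.sum_congr rfl fun s _ => ?_
  rw [mul_left_comm (c s), intervalIntegral.integral_const_mul,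
    intervalIntegral.integral_const_mul]
  ring

theorem average_cube_trigPoly_add_sum_smul {J : Type*} [Fintype J] (η : J → ι → ℝ)
    (b : κ → J → ℤ) (hb : ∀ s ∈ S, ∀ j, ξ s ⬝ᵥ η j = b s j) (φ : ι → ℝ) :
    (((2 * Real.pi) ^ Fintype.card J)⁻¹ : ℝ) •
        ∫ θ in Set.univ.pi (fun _ : J => Set.Icc (0:ℝ) (2 * Real.pi)),
          trigPoly S c ξ (φ + ∑ j, θ j • η j) =
      ∑ s ∈ S, exp (I * ↑(ξ s ⬝ᵥ φ)) * (c s * if b s = 0 then 1 else 0) := by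
  have hsplit : ∀ θ : J → ℝ, trigPoly S c ξ (φ + ∑ j, θ j • η j) =
      ∑ s ∈ S, (exp (I * ↑(ξ s ⬝ᵥ φ)) * c s) * exp (I * ↑(∑ j, θ j * b s j)) :=
    fun θ => Finset.sum_congr rfl fun s hs => by
      simp_rw [dotProduct_add, dotProduct_sum, dotProduct_smul, smul_eq_mul, hb s hs,
        ofReal_add, mul_add, exp_add]
      ring
  have hint : ∀ s ∈ S, IntegrableOn
      (fun θ : J → ℝ => (exp (I * ↑(ξ s ⬝ᵥ φ)) * c s) * exp (I * ↑(∑ j, θ j * b s j)))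
      (Set.univ.pi fun _ => Set.Icc 0 (2 * Real.pi)) := fun s _ =>
    (Continuous.continuousOn (by fun_prop)).integrableOn_compact
      (isCompact_univ_pi fun _ => isCompact_Icc)
  simp_rw [hsplit]
  rw [integral_finsetSum S hint, Finset.smul_sum]
  refine Finset.sum_congr rfl fun s _ => ?_
  rw [integral_const_mul, ← mul_smul_comm, average_cube_exp_I_mul_int, mul_assoc]

theorem tendstoUniformly_average_integral_trigPoly_add_smul (W : ι → ℝ) :
    TendstoUniformly (fun (T : ℝ) φ => (1 / T : ℂ) * ∫ t in (0:ℝ)..T, trigPoly S c ξ (φ + t • W))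
      (fun φ => ∑ s ∈ S, exp (I * ↑(ξ s ⬝ᵥ φ)) * (c s * if ξ s ⬝ᵥ W = 0 then 1 else 0))
      atTop := by
  simp_rw [average_integral_trigPoly_add_smul]
  exact tendstoUniformly_finsetSum_mul S (fun s φ => (norm_exp_I_mul_ofReal _).le)
    fun s _ => (tendsto_average_integral_exp_I_mul _).const_mul (c s)

end trigPoly

theorem dotProduct_eq_zero_of_mem_span {K ι : Type*} [Fintype ι] [CommSemiring K]
    {s : Set (ι → K)} {w v : ι → K} (h : ∀ x ∈ s, x ⬝ᵥ w = 0)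
    (hv : v ∈ Submodule.span K s) : v ⬝ᵥ w = 0 := by
  induction hv using Submodule.span_induction with
  | mem x hx => exact h x hx
  | zero => exact zero_dotProduct w
  | add x y _ _ hx hy => rw [add_dotProduct, hx, hy, add_zero]
  | smul a x _ hx => rw [smul_dotProduct, hx, smul_zero]

theorem dotProduct_eq_zero_iff_mem_span_image {K ι α : Type*} [Fintype ι] [CommSemiring K]
    (g : α → ι → K) (w : ι → K) (P : α → Prop) {a : α} (ha : P a) :
    g a ⬝ᵥ w = 0 ↔ g a ∈ Submodule.span K (g '' {x | P x ∧ g x ⬝ᵥ w = 0}) :=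
  ⟨fun h => Submodule.subset_span ⟨a, ⟨ha, h⟩, rfl⟩,
    dotProduct_eq_zero_of_mem_span fun _ ⟨_, hx, hgx⟩ => hgx ▸ hx.2⟩

namespace Matrix
variable {K ι : Type*} [Fintype ι] [DecidableEq ι] [CommRing K] {M : Matrix ι ι K}

theorem row_dotProduct_inv_mulVec_single (hM : IsUnit M.det) (i j : ι) :
    M i ⬝ᵥ (M⁻¹ *ᵥ Pi.single j 1) = if i = j then 1 else 0 := by
  change (M *ᵥ (M⁻¹ *ᵥ Pi.single j 1)) i = _
  rw [mulVec_mulVec, mul_nonsing_inv _ hM, one_mulVec, Pi.single_apply]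

theorem sum_dotProduct_inv_mulVec_single_smul_row (hM : IsUnit M.det) (v : ι → K) :
    ∑ j, (v ⬝ᵥ (M⁻¹ *ᵥ Pi.single j 1)) • M j = v := by
  simp_rw [dotProduct_mulVec, dotProduct_single, mul_one]
  rw [← vecMul_eq_sum, vecMul_vecMul, nonsing_inv_mul _ hM, vecMul_one]

theorem mem_span_image_rows_iff (hM : IsUnit M.det) (s : Set ι) (v : ι → K) :
    v ∈ Submodule.span K (M '' s) ↔ ∀ j ∉ s, v ⬝ᵥ (M⁻¹ *ᵥ Pi.single j 1) = 0 := by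
  refine ⟨fun hv j hj => dotProduct_eq_zero_of_mem_span ?_ hv, fun hv => ?_⟩
  · rintro _ ⟨i, hi, rfl⟩
    rw [row_dotProduct_inv_mulVec_single hM, if_neg (ne_of_mem_of_not_mem hi hj)]
  rw [← sum_dotProduct_inv_mulVec_single_smul_row hM v]
  refine Submodule.sum_mem _ fun j _ => ?_
  by_cases hj : j ∈ s
  · exact Submodule.smul_mem _ _ (Submodule.subset_span ⟨j, hj, rfl⟩)
  · rw [hv j hj, zero_smul]
    exact Submodule.zero_mem _

variable {R : Type*} [CommRing R] (f : R →+* K) {A : Matrix ι ι R}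

theorem map_nonsing_inv (hA : IsUnit A.det) : (A.map f)⁻¹ = A⁻¹.map f :=
  inv_eq_left_inv <| by
    rw [← Matrix.map_mul, nonsing_inv_mul _ hA, Matrix.map_one f f.map_zero f.map_one]

theorem comp_dotProduct_map_inv_mulVec_single (hA : IsUnit A.det) (v : ι → R) (j : ι) :
    (f ∘ v) ⬝ᵥ ((A.map f)⁻¹ *ᵥ Pi.single j 1) = f (v ⬝ᵥ (A⁻¹ *ᵥ Pi.single j 1)) := by
  rw [map_nonsing_inv f hA, RingHom.map_dotProduct]
  congr 1
  ext k
  simp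

theorem comp_mem_span_image_map_rows_iff (hf : Function.Injective f) (hA : IsUnit A.det)
    (s : Set ι) (v : ι → R) :
    f ∘ v ∈ Submodule.span K (A.map f '' s) ↔ ∀ j ∉ s, v ⬝ᵥ (A⁻¹ *ᵥ Pi.single j 1) = 0 := by
  have hAf : IsUnit (A.map f).det := f.map_det A ▸ hA.map f
  simp_rw [mem_span_image_rows_iff hAf, comp_dotProduct_map_inv_mulVec_single f hA,
    map_eq_zero_iff f hf]

end Matrix

theorem statement8_general (n m : ℕ) (W : Fin n → ℝ)
    (A : Set (Fin n → ℤ))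
    (hA : A = {s : Fin n → ℤ | (∑ k, |s k|) ≤ (m : ℤ) ∧ (∑ k, (s k : ℝ) * W k) = 0})
    (AR : Submodule ℝ (Fin n → ℝ))
    (hAR : AR = Submodule.span ℝ ((fun (s : Fin n → ℤ) (k : Fin n) => (s k : ℝ)) '' A))
    (r : ℕ)
    (ζ : Fin n → Fin n → ℤ)
    (hspan : Submodule.span ℝ
        ((fun (j : Fin n) (k : Fin n) => (ζ j k : ℝ)) '' {j : Fin n | (j : ℕ) < r}) = AR)
    (hdet : (Matrix.of fun i j : Fin n => ζ j i).det = 1 ∨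
        (Matrix.of fun i j : Fin n => ζ j i).det = -1)
    (Rmat : Matrix (Fin n) (Fin n) ℝ)
    (hRmat : Rmat = Matrix.of fun i j : Fin n => (ζ j i : ℝ))
    (η : Fin n → Fin n → ℝ)
    (hη : ∀ j : Fin n, η j = Rmat.transpose⁻¹.mulVec (Pi.single j 1))
    (S : Finset (Fin n → ℤ)) (c : (Fin n → ℤ) → ℂ)
    (hdeg : ∀ s ∈ S, (∑ k, |s k|) ≤ (m : ℤ))
    (f : (Fin n → ℝ) → ℂ)
    (hf : ∀ φ, f φ = ∑ s ∈ S,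
        c s * Complex.exp (Complex.I * Complex.ofReal (∑ k, (s k : ℝ) * φ k)))
    (favg : (Fin n → ℝ) → ℂ)
    (hfavg : ∀ φ, favg φ =
        (((2 * Real.pi) ^ (Fintype.card {j : Fin n // r ≤ (j : ℕ)}))⁻¹ : ℝ) •
          ∫ θ : {j : Fin n // r ≤ (j : ℕ)} → ℝ in
              Set.univ.pi (fun _ => Set.Icc (0:ℝ) (2 * Real.pi)),
            f (fun k => φ k + ∑ j : {j : Fin n // r ≤ (j : ℕ)}, θ j * η (j : Fin n) k)) :
    TendstoUniformly
      (fun (T : ℝ) (φ : Fin n → ℝ) =>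
        (1 / T : ℂ) * ∫ t in (0:ℝ)..T, f (fun k => φ k + t * W k))
      favg atTop := by
  subst hA hAR
  set ξ : (Fin n → ℤ) → Fin n → ℝ := fun s k => s k
  have hf' : f = trigPoly S c ξ := funext hf
  set Z : Matrix (Fin n) (Fin n) ℤ := Matrix.of ζ
  have hZ : IsUnit Z.det := det_transpose Z ▸ Int.isUnit_iff.2 hdet
  have hRZ : Rmat.transpose = Z.map (Int.castRingHom ℝ) := hRmat ▸ rfl
  set b : (Fin n → ℤ) → {j : Fin n // r ≤ (j : ℕ)} → ℤ :=
    fun s j => s ⬝ᵥ (Z⁻¹ *ᵥ Pi.single j 1)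
  have hb : ∀ s ∈ S, ∀ j : {j : Fin n // r ≤ (j : ℕ)}, ξ s ⬝ᵥ η j = b s j := fun s _ j => by
    rw [hη, hRZ]
    exact comp_dotProduct_map_inv_mulVec_single (Int.castRingHom ℝ) hZ s j
  have hres : ∀ s ∈ S, ξ s ⬝ᵥ W = 0 ↔ b s = 0 := by
    intro s hs
    have hspan' : Submodule.span ℝ (Z.map (Int.castRingHom ℝ) '' {j : Fin n | (j : ℕ) < r}) =
        Submodule.span ℝ (ξ '' {x | ∑ k, |x k| ≤ (m : ℤ) ∧ ξ x ⬝ᵥ W = 0}) := hspan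
    rw [dotProduct_eq_zero_iff_mem_span_image ξ W (fun x => ∑ k, |x k| ≤ (m : ℤ)) (hdeg s hs),
      ← hspan']
    refine (comp_mem_span_image_map_rows_iff (Int.castRingHom ℝ) Int.cast_injective hZ _ s).trans ?_
    simp [funext_iff, b]
  have hvec : ∀ φ (θ : {j : Fin n // r ≤ (j : ℕ)} → ℝ),
      (fun k => φ k + ∑ j, θ j * η j k) = φ + ∑ j, θ j • η j := fun φ θ => by
    ext k
    simp [Finset.sum_apply]
  have hspace : ∀ φ, favg φ = ∑ s ∈ S, exp (I * ↑(ξ s ⬝ᵥ φ)) *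
      (c s * if ξ s ⬝ᵥ W = 0 then 1 else 0) := fun φ => by
    simp_rw [hfavg, hvec, hf', average_cube_trigPoly_add_sum_smul S c ξ _ b hb]
    exact Finset.sum_congr rfl fun s hs => by simp only [hres s hs]
  rw [funext hspace, hf']
  exact tendstoUniformly_average_integral_trigPoly_add_smul S c ξ W

/-- Let `f(φ) = Σ_{s∈S} f_s e^{i s·φ}` be a trigonometric polynomial of degree
`≤ m`.  Then `(1/T)∫₀^T f(φ + tW) dt` converges, as `T → ∞`, to the resonant average
`⟨f⟩_W(φ) = ∫_{[0,2π]^{n−r}} f(φ + Σ_{j>r} θ_j η^j) ∏ dθ_j/(2π)`, uniformly in `φ ∈ ℝⁿ`. -/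
theorem statement8 (n m : ℕ) (W : Fin n → ℝ)
    (A : Set (Fin n → ℤ))
    (hA : A = {s : Fin n → ℤ | (∑ k, |s k|) ≤ (m : ℤ) ∧ (∑ k, (s k : ℝ) * W k) = 0})
    (AR : Submodule ℝ (Fin n → ℝ))
    (hAR : AR = Submodule.span ℝ ((fun (s : Fin n → ℤ) (k : Fin n) => (s k : ℝ)) '' A))
    (r : ℕ) (hr : r = Module.finrank ℝ AR)
    (ζ : Fin n → Fin n → ℤ)
    (hspan : Submodule.span ℝ
        ((fun (j : Fin n) (k : Fin n) => (ζ j k : ℝ)) '' {j : Fin n | (j : ℕ) < r}) = AR)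
    (hdet : (Matrix.of fun i j : Fin n => ζ j i).det = 1 ∨
        (Matrix.of fun i j : Fin n => ζ j i).det = -1)
    (Rmat : Matrix (Fin n) (Fin n) ℝ)
    (hRmat : Rmat = Matrix.of fun i j : Fin n => (ζ j i : ℝ))
    (η : Fin n → Fin n → ℝ)
    (hη : ∀ j : Fin n, η j = Rmat.transpose⁻¹.mulVec (Pi.single j 1))
    (S : Finset (Fin n → ℤ)) (c : (Fin n → ℤ) → ℂ)
    (hdeg : ∀ s ∈ S, (∑ k, |s k|) ≤ (m : ℤ))
    (f : (Fin n → ℝ) → ℂ)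
    (hf : ∀ φ, f φ = ∑ s ∈ S,
        c s * Complex.exp (Complex.I * Complex.ofReal (∑ k, (s k : ℝ) * φ k)))
    (favg : (Fin n → ℝ) → ℂ)
    (hfavg : ∀ φ, favg φ =
        (((2 * Real.pi) ^ (Fintype.card {j : Fin n // r ≤ (j : ℕ)}))⁻¹ : ℝ) •
          ∫ θ : {j : Fin n // r ≤ (j : ℕ)} → ℝ in
              Set.univ.pi (fun _ => Set.Icc (0:ℝ) (2 * Real.pi)),
            f (fun k => φ k + ∑ j : {j : Fin n // r ≤ (j : ℕ)}, θ j * η (j : Fin n) k)) :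
    TendstoUniformly
      (fun (T : ℝ) (φ : Fin n → ℝ) =>
        (1 / T : ℂ) * ∫ t in (0:ℝ)..T, f (fun k => φ k + t * W k))
      favg atTop :=
  statement8_general n m W A hA AR hAR r ζ hspan hdet Rmat hRmat η hη S c hdeg f hf favg hfavg
end

section
/- Let P : ℂ^n → ℂ^n be continuous and define the averaged vector field R⁰(v) = ∫_{[0,2π]^{n−r}} Ψ_{−Σθ_jη^j} P(Ψ_{Σθ_jη^j} v) ∏_{j=r+1}^n dθ_j/(2π). Then for every w ∈ ℝ^n with w·s = 0 for all s ∈ 𝒜(W,m) (i.e. w ∈ (𝒜^R)^⊥) and every v ∈ ℂ^n, one has Ψ_{−w} R⁰(Ψ_w v) = R⁰(v). -/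
open scoped BigOperators
open MeasureTheory

open Set in
lemma pi_restrict_eq' {ι : Type*} [Fintype ι] (s : ι → Set ℝ) (hs : ∀ i, MeasurableSet (s i)) :
    (Measure.pi fun i : ι => (volume : Measure ℝ).restrict (s i)) =
      (volume : Measure (ι → ℝ)).restrict (Set.univ.pi s) := by
  refine (Measure.pi_eq (μ := fun i : ι => (volume : Measure ℝ).restrict (s i))
    (μ' := (volume : Measure (ι → ℝ)).restrict (Set.univ.pi s)) fun t ht => ?_)
  rw [Measure.restrict_apply (MeasurableSet.univ_pi ht), ← Set.pi_inter_distrib,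
    volume_pi_pi]
  exact Finset.prod_congr rfl fun i _ => (Measure.restrict_apply (ht i)).symm

open AddCircle Set in
lemma cube_translate' {ι : Type*} [Fintype ι] {N : ℕ}
    (F : (ι → ℝ) → (Fin N → ℂ)) (hF : Continuous F)
    (hper : ∀ (θ : ι → ℝ) (mm : ι → ℤ),
      F (fun i => θ i + mm i * (2 * Real.pi)) = F θ)
    (c : ι → ℝ) :
    ∫ θ in Set.univ.pi (fun _ : ι => Icc (0:ℝ) (2*Real.pi)), F (fun i => θ i + c i) =
    ∫ θ in Set.univ.pi (fun _ : ι => Icc (0:ℝ) (2*Real.pi)), F θ := by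
  set T : ℝ := 2 * Real.pi with hT
  haveI : Fact (0 < T) := ⟨by positivity⟩
  have hae : (Set.univ.pi fun _ : ι => Ioc (0:ℝ) T) =ᵐ[(volume : Measure (ι → ℝ))]
      (Set.univ.pi fun _ : ι => Icc (0:ℝ) T) := by
    rw [volume_pi]
    exact Measure.pi_Ioc_ae_eq_pi_Icc
  rw [← setIntegral_congr_set hae, ← setIntegral_congr_set hae]
  set q : (ι → ℝ) → (ι → AddCircle T) := fun θ i => (θ i : AddCircle T) with hq
  have mp : MeasurePreserving q ((volume : Measure (ι → ℝ)).restrict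
      (Set.univ.pi fun _ : ι => Ioc (0:ℝ) T)) (volume : Measure (ι → AddCircle T)) := by
    have h1 := measurePreserving_pi (fun _ : ι => (volume : Measure ℝ).restrict (Ioc 0 T))
      (fun _ : ι => (volume : Measure (AddCircle T)))
      (f := fun _ : ι => ((↑) : ℝ → AddCircle T))
      (fun i => by simpa using AddCircle.measurePreserving_mk T 0)
    rwa [pi_restrict_eq' _ (fun _ => measurableSet_Ioc), ← volume_pi] at h1
  set g : (ι → AddCircle T) → (Fin N → ℂ) :=
    fun x => F fun i => ((AddCircle.equivIoc T 0 (x i)) : ℝ) with hg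
  have hgm : Measurable g := by
    apply hF.measurable.comp
    exact measurable_pi_lambda _ fun i =>
      (measurable_subtype_coe.comp ((AddCircle.measurableEquivIoc T 0).measurable)).comp
        (measurable_pi_apply i)
  have hFg : ∀ θ : ι → ℝ, g (q θ) = F θ := by
    intro θ
    have : ∀ i, ∃ mm : ℤ, ((AddCircle.equivIoc T 0 ((θ i : AddCircle T))) : ℝ)
        = θ i + mm * T := by
      intro i
      have hT0 : 0 < T := Fact.out
      have h2 : ((AddCircle.equivIoc T 0 ((θ i : AddCircle T))) : ℝ)
          = toIocMod hT0 0 (θ i) := by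
        rw [AddCircle.equivIoc, QuotientAddGroup.equivIocMod_coe]
      exact ⟨-toIocDiv hT0 0 (θ i), by rw [h2, toIocMod, zsmul_eq_mul]; push_cast; ring⟩
    choose mm hmm using this
    have : g (q θ) = F fun i => θ i + mm i * T := congrArg F (funext fun i => hmm i)
    rw [this]; exact hper θ mm
  have key : ∀ d : ι → ℝ, ∫ θ in Set.univ.pi (fun _ : ι => Ioc (0:ℝ) T), F (fun i => θ i + d i)
      = ∫ x : ι → AddCircle T, g (x + q d) := by
    intro d
    have : ∀ θ : ι → ℝ, F (fun i => θ i + d i) = g (q θ + q d) := by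
      intro θ
      rw [← hFg (fun i => θ i + d i)]
      rfl
    simp_rw [this]
    rw [← mp.map_eq, integral_map mp.aemeasurable]
    exact ((hgm.comp (measurable_add_const (q d))).aestronglyMeasurable)
  rw [key c]
  have h0 : ∫ θ in Set.univ.pi (fun _ : ι => Ioc (0:ℝ) T), F θ = ∫ x : ι → AddCircle T, g x := by
    have h1 := key 0
    have hq0 : q 0 = 0 := by funext i; simp [hq]
    simp only [Pi.zero_apply, add_zero, hq0] at h1
    exact h1
  rw [h0]
  exact integral_add_right_eq_self g (q c)

/-- Let `P : ℂⁿ → ℂⁿ` be continuous and let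
`R⁰(v) = ⨍ Ψ_{−Σθ_jη^j} P(Ψ_{Σθ_jη^j} v) ∏ dθ_j/(2π)` be the averaged vector field.  Then for
every `w ∈ ℝⁿ` with `w·s = 0` for all `s ∈ 𝒜(W,m)` (i.e. `w ∈ (𝒜^R)^⊥`) and every `v ∈ ℂⁿ`,
`Ψ_{−w} R⁰(Ψ_w v) = R⁰(v)`. -/
theorem statement13 (n m : ℕ) (W : Fin n → ℝ)
    (A : Set (Fin n → ℤ))
    (hA : A = {s : Fin n → ℤ | (∑ k, |s k|) ≤ (m : ℤ) ∧ (∑ k, (s k : ℝ) * W k) = 0})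
    (AR : Submodule ℝ (Fin n → ℝ))
    (hAR : AR = Submodule.span ℝ ((fun (s : Fin n → ℤ) (k : Fin n) => (s k : ℝ)) '' A))
    (r : ℕ) (hr : r = Module.finrank ℝ AR)
    (ζ : Fin n → Fin n → ℤ)
    (hspan : Submodule.span ℝ
        ((fun (j : Fin n) (k : Fin n) => (ζ j k : ℝ)) '' {j : Fin n | (j : ℕ) < r}) = AR)
    (hdet : (Matrix.of fun i j : Fin n => ζ j i).det = 1 ∨
        (Matrix.of fun i j : Fin n => ζ j i).det = -1)
    (Rmat : Matrix (Fin n) (Fin n) ℝ)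
    (hRmat : Rmat = Matrix.of fun i j : Fin n => (ζ j i : ℝ))
    (η : Fin n → Fin n → ℝ)
    (hη : ∀ j : Fin n, η j = Rmat.transpose⁻¹.mulVec (Pi.single j 1))
    (Ψ : (Fin n → ℝ) → (Fin n → ℂ) → (Fin n → ℂ))
    (hΨ : ∀ (α : Fin n → ℝ) (v : Fin n → ℂ) (k : Fin n),
        Ψ α v k = Complex.exp (Complex.I * Complex.ofReal (α k)) * v k)
    (P : (Fin n → ℂ) → (Fin n → ℂ)) (hP : Continuous P)
    (R0 : (Fin n → ℂ) → (Fin n → ℂ))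
    (hR0 : ∀ v : Fin n → ℂ, R0 v =
        (((2 * Real.pi) ^ (Fintype.card {j : Fin n // r ≤ (j : ℕ)}))⁻¹ : ℝ) •
          ∫ θ : {j : Fin n // r ≤ (j : ℕ)} → ℝ in
              Set.univ.pi (fun _ => Set.Icc (0:ℝ) (2 * Real.pi)),
            Ψ (fun k => -(∑ j : {j : Fin n // r ≤ (j : ℕ)}, θ j * η (j : Fin n) k))
              (P (Ψ (fun k => ∑ j : {j : Fin n // r ≤ (j : ℕ)}, θ j * η (j : Fin n) k) v))) :
    ∀ w : Fin n → ℝ, (∀ s ∈ A, (∑ k, w k * (s k : ℝ)) = 0) →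
      ∀ v : Fin n → ℂ, Ψ (fun k => -(w k)) (R0 (Ψ w v)) = R0 v := by
  intro w hw v
  classical
  set ι := {j : Fin n // r ≤ (j : ℕ)}
  -- Step 1 : η has integer entries
  set Z : Matrix (Fin n) (Fin n) ℤ := Matrix.of fun i j : Fin n => ζ j i with hZ
  have hZdet : IsUnit Z.det := by
    rcases hdet with h | h
    · exact h ▸ isUnit_one
    · exact h ▸ (Int.isUnit_iff.mpr (Or.inr rfl))
  have hZTdet : IsUnit Z.transpose.det := by rwa [Matrix.det_transpose]
  have hRT : Rmat.transpose = Z.transpose.map (Int.cast : ℤ → ℝ) := by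
    ext i j; simp [hRmat, hZ, Matrix.transpose_apply]
  have hRTinv : Rmat.transpose⁻¹ = (Z.transpose⁻¹).map (Int.cast : ℤ → ℝ) := by
    apply Matrix.inv_eq_right_inv
    rw [hRT]
    have h1 : Z.transpose * Z.transpose⁻¹ = 1 := Matrix.mul_nonsing_inv _ hZTdet
    calc Z.transpose.map (Int.cast : ℤ → ℝ) * (Z.transpose⁻¹).map (Int.cast : ℤ → ℝ)
        = (Z.transpose * Z.transpose⁻¹).map (Int.cast : ℤ → ℝ) :=
          (Matrix.map_mul (f := Int.castRingHom ℝ)).symm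
      _ = (1 : Matrix (Fin n) (Fin n) ℤ).map (Int.cast : ℤ → ℝ) := by rw [h1]
      _ = 1 := by ext i j; by_cases hij : i = j <;> simp [Matrix.one_apply, hij]
  have hηint : ∀ j k : Fin n, η j k = ((Z.transpose⁻¹ k j : ℤ) : ℝ) := by
    intro j k
    rw [hη j, Matrix.mulVec_single_one, hRTinv]
    rfl
  -- Step 2 : decomposition of w
  set c : Fin n → ℝ := fun j => ∑ k, w k * (ζ j k : ℝ) with hc
  have hc0 : ∀ j : Fin n, (j : ℕ) < r → c j = 0 := by
    intro j hj
    have hmem : (fun k : Fin n => (ζ j k : ℝ)) ∈ AR := by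
      rw [← hspan]
      exact Submodule.subset_span ⟨j, hj, rfl⟩
    rw [hAR] at hmem
    have : ∀ x ∈ Submodule.span ℝ ((fun (s : Fin n → ℤ) (k : Fin n) => (s k : ℝ)) '' A),
        ∑ k, w k * x k = 0 := by
      intro x hx
      induction hx using Submodule.span_induction with
      | mem x hx => obtain ⟨s, hs, rfl⟩ := hx; exact hw s hs
      | zero => simp
      | add x y _ _ hx hy => simp [mul_add, Finset.sum_add_distrib, hx, hy]
      | smul a x _ hx => simp only [Pi.smul_apply, smul_eq_mul, mul_left_comm,
          ← Finset.mul_sum, hx, mul_zero]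
    exact this _ hmem
  have hRdet : IsUnit Rmat.transpose.det := by
    have hdet2 : Rmat.transpose.det = ((Z.transpose.det : ℤ) : ℝ) := by
      rw [hRT]
      exact (RingHom.map_det (Int.castRingHom ℝ) Z.transpose).symm
    rw [hdet2, Matrix.det_transpose]
    refine isUnit_iff_ne_zero.mpr ?_
    rcases hdet with h | h <;> rw [show Z.det = (Matrix.of fun i j : Fin n => ζ j i).det from rfl, h] <;> norm_num
  have hwdec : ∀ k : Fin n, w k = ∑ j : Fin n, c j * η j k := by
    intro k
    have hcv : c = Rmat.transpose.mulVec w := by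
      funext j
      simp only [Matrix.mulVec, dotProduct, Matrix.transpose_apply, hRmat, hc]
      exact Finset.sum_congr rfl fun k' _ => by rw [mul_comm]; rfl
    have h1 : ∑ j : Fin n, c j * η j k = (Rmat.transpose⁻¹.mulVec c) k := by
      simp only [Matrix.mulVec, dotProduct]
      refine Finset.sum_congr rfl fun j _ => ?_
      rw [hη j, Matrix.mulVec_single_one, mul_comm]
      rfl
    rw [h1, hcv, Matrix.mulVec_mulVec, Matrix.nonsing_inv_mul _ hRdet, Matrix.one_mulVec]
  -- restrict to subtype sum
  have hwdec' : ∀ k : Fin n, w k = ∑ j : ι, c (j : Fin n) * η (j : Fin n) k := by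
    intro k
    have hsub : ∑ j : ι, c (j : Fin n) * η (j : Fin n) k
        = ∑ j ∈ Finset.univ.filter (fun j : Fin n => r ≤ (j : ℕ)), c j * η j k :=
      (Finset.sum_subtype (p := fun j : Fin n => r ≤ (j : ℕ)) _
        (fun j => by simp) (fun j => c j * η j k)).symm
    have hz : ∑ j ∈ Finset.univ.filter (fun j : Fin n => ¬ r ≤ (j : ℕ)),
        c j * η j k = 0 := by
      refine Finset.sum_eq_zero fun j hj => ?_
      rw [Finset.mem_filter] at hj
      rw [hc0 j (lt_of_not_ge hj.2), zero_mul]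
    rw [hwdec k,
      ← Finset.sum_filter_add_sum_filter_not Finset.univ (fun j : Fin n => r ≤ (j : ℕ)),
      hz, add_zero, hsub]
  -- Step 3 : the analytic part
  set cI : ι → ℝ := fun j => c (j : Fin n) with hcI
  have hΨc : Continuous fun p : (Fin n → ℝ) × (Fin n → ℂ) => Ψ p.1 p.2 := by
    have heq : (fun p : (Fin n → ℝ) × (Fin n → ℂ) => Ψ p.1 p.2)
        = fun p => fun k => Complex.exp (Complex.I * ((p.1 k : ℝ) : ℂ)) * p.2 k := by
      funext p; funext k; exact hΨ p.1 p.2 k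
    rw [heq]
    refine continuous_pi fun k => ?_
    exact ((Complex.continuous_exp.comp (continuous_const.mul
      (Complex.continuous_ofReal.comp ((continuous_apply k).comp continuous_fst)))).mul
      ((continuous_apply k).comp continuous_snd))
  have hsumc : Continuous fun θ : ι → ℝ => (fun k => ∑ j : ι, θ j * η (j : Fin n) k) :=
    continuous_pi fun k => continuous_finset_sum _ fun j _ =>
      ((continuous_apply j).mul continuous_const)
  have hnegc : Continuous fun θ : ι → ℝ => (fun k => -(∑ j : ι, θ j * η (j : Fin n) k)) :=
    continuous_pi fun k => (continuous_finset_sum _ fun j _ =>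
      ((continuous_apply j).mul continuous_const)).neg
  have hcont : ∀ u : Fin n → ℂ, Continuous (fun θ : ι → ℝ =>
      Ψ (fun k => -(∑ j : ι, θ j * η (j : Fin n) k))
        (P (Ψ (fun k => ∑ j : ι, θ j * η (j : Fin n) k) u))) := by
    intro u
    exact hΨc.comp (hnegc.prodMk
      (hP.comp (hΨc.comp (hsumc.prodMk continuous_const))))
  -- phase periodicity
  have hphase : ∀ (θ : ι → ℝ) (mm : ι → ℤ) (k : Fin n),
      Complex.exp (Complex.I *
          ((∑ j : ι, (θ j + mm j * (2 * Real.pi)) * η (j : Fin n) k : ℝ) : ℂ))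
        = Complex.exp (Complex.I * ((∑ j : ι, θ j * η (j : Fin n) k : ℝ) : ℂ)) := by
    intro θ mm k
    have hM : ∑ j : ι, (θ j + mm j * (2 * Real.pi)) * η (j : Fin n) k
        = (∑ j : ι, θ j * η (j : Fin n) k)
          + ((∑ j : ι, mm j * Z.transpose⁻¹ k (j : Fin n) : ℤ) : ℝ) * (2 * Real.pi) := by
      push_cast
      rw [Finset.sum_mul, ← Finset.sum_add_distrib]
      refine Finset.sum_congr rfl fun j _ => ?_
      rw [hηint (j : Fin n) k]
      ring
    rw [hM]
    push_cast
    rw [mul_add, Complex.exp_add]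
    have h1 : Complex.I * ((∑ x : ι, ((mm x : ℂ)) * ((Z.transpose⁻¹ k (x : Fin n) : ℤ) : ℂ))
          * (2 * (Real.pi : ℂ)))
        = ((∑ x : ι, mm x * Z.transpose⁻¹ k (x : Fin n) : ℤ) : ℂ)
          * (2 * (Real.pi : ℂ) * Complex.I) := by push_cast; ring
    rw [h1, Complex.exp_int_mul_two_pi_mul_I, mul_one]
  -- periodicity of the integrands
  have hper : ∀ u : Fin n → ℂ, ∀ (θ : ι → ℝ) (mm : ι → ℤ),
      (fun θ : ι → ℝ => Ψ (fun k => -(∑ j : ι, θ j * η (j : Fin n) k))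
          (P (Ψ (fun k => ∑ j : ι, θ j * η (j : Fin n) k) u)))
        (fun i => θ i + mm i * (2 * Real.pi))
      = (fun θ : ι → ℝ => Ψ (fun k => -(∑ j : ι, θ j * η (j : Fin n) k))
          (P (Ψ (fun k => ∑ j : ι, θ j * η (j : Fin n) k) u))) θ := by
    intro u θ mm
    have hPin : Ψ (fun k => ∑ j : ι, (θ j + mm j * (2 * Real.pi)) * η (j : Fin n) k) u
        = Ψ (fun k => ∑ j : ι, θ j * η (j : Fin n) k) u := by
      funext k
      rw [hΨ, hΨ, hphase θ mm k]
    simp only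
    rw [hPin]
    funext k
    rw [hΨ, hΨ]
    congr 1
    rw [Complex.ofReal_neg, Complex.ofReal_neg, mul_neg, mul_neg,
      Complex.exp_neg, Complex.exp_neg, hphase θ mm k]
  -- the continuous linear map given by Ψ(-w)
  set L : (Fin n → ℂ) →L[ℂ] (Fin n → ℂ) := ContinuousLinearMap.pi fun k =>
    Complex.exp (Complex.I * ((-(w k) : ℝ) : ℂ)) • ContinuousLinearMap.proj k with hLdef
  have hLa : ∀ u : Fin n → ℂ, L u = Ψ (fun k => -(w k)) u := by
    intro u
    funext k
    rw [hΨ]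
    simp [hLdef, smul_eq_mul]
  -- sum addition identity
  have hsum_add : ∀ (θ : ι → ℝ) (k : Fin n),
      ∑ j : ι, (θ j + cI j) * η (j : Fin n) k
        = (∑ j : ι, θ j * η (j : Fin n) k) + w k := by
    intro θ k
    rw [hwdec' k, ← Finset.sum_add_distrib]
    exact Finset.sum_congr rfl fun j _ => by ring
  have hinner : ∀ θ : ι → ℝ,
      Ψ (fun k => ∑ j : ι, (θ j + cI j) * η (j : Fin n) k) v
        = Ψ (fun k => ∑ j : ι, θ j * η (j : Fin n) k) (Ψ w v) := by
    intro θ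
    funext k
    rw [hΨ, hΨ, hΨ, hsum_add θ k]
    push_cast
    rw [mul_add, Complex.exp_add]
    ring
  have hLF : ∀ θ : ι → ℝ,
      L (Ψ (fun k => -(∑ j : ι, θ j * η (j : Fin n) k))
          (P (Ψ (fun k => ∑ j : ι, θ j * η (j : Fin n) k) (Ψ w v))))
        = Ψ (fun k => -(∑ j : ι, (θ j + cI j) * η (j : Fin n) k))
          (P (Ψ (fun k => ∑ j : ι, (θ j + cI j) * η (j : Fin n) k) v)) := by
    intro θ
    rw [hLa, hinner θ]
    funext k
    rw [hΨ, hΨ, hΨ, hsum_add θ k]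
    push_cast
    rw [neg_add, mul_add, Complex.exp_add]
    ring
  -- integrability
  have hint : IntegrableOn
      (fun θ : ι → ℝ => Ψ (fun k => -(∑ j : ι, θ j * η (j : Fin n) k))
        (P (Ψ (fun k => ∑ j : ι, θ j * η (j : Fin n) k) (Ψ w v))))
      (Set.univ.pi fun _ : ι => Set.Icc (0:ℝ) (2 * Real.pi)) volume :=
    (hcont (Ψ w v)).continuousOn.integrableOn_compact
      (isCompact_univ_pi fun _ => isCompact_Icc)
  -- main computation
  rw [hR0 (Ψ w v), hR0 v, ← hLa, L.map_smul_of_tower]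
  congr 1
  rw [← ContinuousLinearMap.integral_comp_comm L hint]
  have hstep : ∫ θ : ι → ℝ in Set.univ.pi (fun _ : ι => Set.Icc (0:ℝ) (2 * Real.pi)),
      L (Ψ (fun k => -(∑ j : ι, θ j * η (j : Fin n) k))
        (P (Ψ (fun k => ∑ j : ι, θ j * η (j : Fin n) k) (Ψ w v))))
      = ∫ θ : ι → ℝ in Set.univ.pi (fun _ : ι => Set.Icc (0:ℝ) (2 * Real.pi)),
        (fun θ' : ι → ℝ => Ψ (fun k => -(∑ j : ι, θ' j * η (j : Fin n) k))
          (P (Ψ (fun k => ∑ j : ι, θ' j * η (j : Fin n) k) v))) (fun i => θ i + cI i) := by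
    refine integral_congr_ae (Filter.Eventually.of_forall fun θ => ?_)
    simpa using hLF θ
  rw [hstep]
  exact cube_translate' _ (hcont v) (hper v) cI
end

section
/- Let H : ℂ^n → ℝ be continuous and define H^res(v) = ∫_{[0,2π]^{n−r}} H(Ψ_{Σθ_jη^j} v) ∏_{j=r+1}^n dθ_j/(2π). Then for every w ∈ ℝ^n with w·s = 0 for all s ∈ 𝒜(W,m) (in particular for w = W itself), and for all t ∈ ℝ, v ∈ ℂ^n, one has H^res(Ψ_{tw} v) = H^res(v). -/
open scoped BigOperators
open MeasureTheory

theorem auxMeasurePreservingPi {ι : Type*} [Fintype ι] {α β : ι → Type*}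
    [∀ i, MeasurableSpace (α i)] [∀ i, MeasurableSpace (β i)]
    (μ : ∀ i, Measure (α i)) (ν : ∀ i, Measure (β i))
    [∀ i, SigmaFinite (μ i)] [∀ i, SigmaFinite (ν i)]
    (f : ∀ i, α i → β i) (hf : ∀ i, MeasurePreserving (f i) (μ i) (ν i)) :
    MeasurePreserving (fun (a : ∀ i, α i) i => f i (a i)) (Measure.pi μ) (Measure.pi ν) := by
  have hmeas : Measurable fun (a : ∀ i, α i) i => f i (a i) :=
    measurable_pi_lambda _ fun i => (hf i).measurable.comp (measurable_pi_apply i)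
  refine ⟨hmeas, ?_⟩
  refine (Measure.pi_eq fun s hs => ?_).symm
  rw [Measure.map_apply hmeas (MeasurableSet.univ_pi hs)]
  have h1 : (fun (a : ∀ i, α i) i => f i (a i)) ⁻¹' Set.univ.pi s
      = Set.univ.pi fun i => f i ⁻¹' s i := by
    ext a; simp [Set.mem_pi]
  rw [h1, Measure.pi_pi]
  refine Finset.prod_congr rfl fun i _ => ?_
  rw [← (hf i).map_eq, Measure.map_apply (hf i).measurable (hs i)]

theorem auxRestrictPi {ι : Type*} [Fintype ι] {α : ι → Type*} [∀ i, MeasurableSpace (α i)]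
    (μ : ∀ i, Measure (α i)) [∀ i, SigmaFinite (μ i)]
    (t : ∀ i, Set (α i)) (ht : ∀ i, MeasurableSet (t i))
    [∀ i, SigmaFinite ((μ i).restrict (t i))] :
    (Measure.pi μ).restrict (Set.univ.pi t) = Measure.pi fun i => (μ i).restrict (t i) := by
  refine (Measure.pi_eq fun s hs => ?_).symm
  rw [Measure.restrict_apply (MeasurableSet.univ_pi hs), ← Set.pi_inter_distrib, Measure.pi_pi]
  exact Finset.prod_congr rfl fun i _ => (Measure.restrict_apply (hs i)).symm

set_option maxHeartbeats 1000000 in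
/-- Let `H : ℂⁿ → ℝ` be continuous and let `H^res` be the average of
`H ∘ Ψ_{Σθ_jη^j}` over the cube `[0,2π]^{n−r}`.  Then for every `w ∈ ℝⁿ` with `w·s = 0` for all
`s ∈ 𝒜(W,m)` (in particular for `w = W` itself), and all `t ∈ ℝ`, `v ∈ ℂⁿ`,
`H^res(Ψ_{tw} v) = H^res(v)`. -/
theorem statement14 (n m : ℕ) (W : Fin n → ℝ)
    (A : Set (Fin n → ℤ))
    (hA : A = {s : Fin n → ℤ | (∑ k, |s k|) ≤ (m : ℤ) ∧ (∑ k, (s k : ℝ) * W k) = 0})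
    (AR : Submodule ℝ (Fin n → ℝ))
    (hAR : AR = Submodule.span ℝ ((fun (s : Fin n → ℤ) (k : Fin n) => (s k : ℝ)) '' A))
    (r : ℕ) (hr : r = Module.finrank ℝ AR)
    (ζ : Fin n → Fin n → ℤ)
    (hspan : Submodule.span ℝ
        ((fun (j : Fin n) (k : Fin n) => (ζ j k : ℝ)) '' {j : Fin n | (j : ℕ) < r}) = AR)
    (hdet : (Matrix.of fun i j : Fin n => ζ j i).det = 1 ∨
        (Matrix.of fun i j : Fin n => ζ j i).det = -1)
    (Rmat : Matrix (Fin n) (Fin n) ℝ)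
    (hRmat : Rmat = Matrix.of fun i j : Fin n => (ζ j i : ℝ))
    (η : Fin n → Fin n → ℝ)
    (hη : ∀ j : Fin n, η j = Rmat.transpose⁻¹.mulVec (Pi.single j 1))
    (Ψ : (Fin n → ℝ) → (Fin n → ℂ) → (Fin n → ℂ))
    (hΨ : ∀ (α : Fin n → ℝ) (v : Fin n → ℂ) (k : Fin n),
        Ψ α v k = Complex.exp (Complex.I * Complex.ofReal (α k)) * v k)
    (H : (Fin n → ℂ) → ℝ) (hH : Continuous H)
    (Hres : (Fin n → ℂ) → ℝ)
    (hHres : ∀ v : Fin n → ℂ, Hres v =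
        (((2 * Real.pi) ^ (Fintype.card {j : Fin n // r ≤ (j : ℕ)}))⁻¹ : ℝ) •
          ∫ θ : {j : Fin n // r ≤ (j : ℕ)} → ℝ in
              Set.univ.pi (fun _ => Set.Icc (0:ℝ) (2 * Real.pi)),
            H (Ψ (fun k => ∑ j : {j : Fin n // r ≤ (j : ℕ)}, θ j * η (j : Fin n) k) v)) :
    ∀ w : Fin n → ℝ, (∀ s ∈ A, (∑ k, w k * (s k : ℝ)) = 0) →
      ∀ (t : ℝ) (v : Fin n → ℂ), Hres (Ψ (fun k => t * w k) v) = Hres v := by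
  classical
  intro w hw t v
  set T : ℝ := 2 * Real.pi with hT
  have hTpos : (0:ℝ) < T := by rw [hT]; positivity
  haveI : Fact ((0:ℝ) < T) := ⟨hTpos⟩
  -- the integer matrix
  set M : Matrix (Fin n) (Fin n) ℤ := Matrix.of (fun i j : Fin n => ζ j i) with hM
  have hRmap : Rmat = M.map (Int.cast : ℤ → ℝ) := by
    rw [hRmat]; ext i j; simp [hM]
  have hRdet : Rmat.det = ((M.det : ℤ) : ℝ) := by
    rw [hRmap]
    exact ((RingHom.map_det (Int.castRingHom ℝ) M).symm : _)
  have hUnit : IsUnit Rmat.det := by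
    rcases hdet with h | h <;> rw [hRdet, h] <;> simp
  have hUnitT : IsUnit Rmat.transpose.det := by rwa [Matrix.det_transpose]
  -- η has integer entries
  set N : Fin n → Fin n → ℤ := fun j k => M.det * M.transpose.adjugate k j with hN
  have hηZ : ∀ j k, η j k = (N j k : ℝ) := by
    intro j k
    have hadj : Rmat.transpose.adjugate = (M.transpose.adjugate).map (Int.cast : ℤ → ℝ) := by
      rw [hRmap]
      have h2 : (M.map (Int.cast : ℤ → ℝ)).transpose = M.transpose.map (Int.cast : ℤ → ℝ) := rfl
      rw [h2]
      exact ((RingHom.map_adjugate (Int.castRingHom ℝ) M.transpose).symm : _)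
    have h1 : Rmat.transpose⁻¹
        = ((M.det : ℤ) : ℝ) • ((M.transpose.adjugate).map (Int.cast : ℤ → ℝ)) := by
      rw [Matrix.inv_def, Matrix.det_transpose, hRdet, hadj, Ring.inverse_eq_inv]
      congr 1
      rcases hdet with h | h <;> rw [h] <;> norm_num
    rw [hη j, h1, Matrix.smul_mulVec]
    have h3 : ((M.transpose.adjugate).map (Int.cast : ℤ → ℝ)).mulVec (Pi.single j 1) k
        = (M.transpose.adjugate k j : ℝ) := by
      rw [Matrix.mulVec_single]
      simp [Matrix.map_apply]
    simp only [Pi.smul_apply, h3, smul_eq_mul, hN]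
    push_cast
    ring
  -- decomposition of t•w in the η basis
  set u : Fin n → ℝ := Rmat.transpose.mulVec (fun k => t * w k) with hu
  have hdecomp : ∀ k, t * w k = ∑ j : Fin n, u j * η j k := by
    intro k
    have h2 : ∀ j k', η j k' = Rmat.transpose⁻¹ k' j := by
      intro j k'
      rw [hη j, Matrix.mulVec_single]
      simp
    calc t * w k = (Rmat.transpose⁻¹.mulVec u) k := by
          rw [hu, Matrix.mulVec_mulVec, Matrix.nonsing_inv_mul _ hUnitT, Matrix.one_mulVec]
      _ = ∑ j, Rmat.transpose⁻¹ k j * u j := by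
          simp [Matrix.mulVec, dotProduct]
      _ = ∑ j, u j * η j k := by
          refine Finset.sum_congr rfl fun j _ => ?_
          rw [h2 j k]; ring
  -- coefficients with index < r vanish
  have hker : ∀ i : Fin n, (i : ℕ) < r → u i = 0 := by
    intro i hi
    have hζAR : (fun k => (ζ i k : ℝ)) ∈ AR := by
      rw [← hspan]; exact Submodule.subset_span ⟨i, hi, rfl⟩
    set φ : (Fin n → ℝ) →ₗ[ℝ] ℝ :=
      ∑ k, (w k) • (LinearMap.proj k : (Fin n → ℝ) →ₗ[ℝ] ℝ) with hφdef
    have hφapply : ∀ x : Fin n → ℝ, φ x = ∑ k, w k * x k := by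
      intro x; rw [hφdef]; simp
    have hARle : AR ≤ LinearMap.ker φ := by
      rw [hAR, Submodule.span_le]
      rintro x ⟨s, hs, rfl⟩
      simp only [SetLike.mem_coe, LinearMap.mem_ker, hφapply]
      exact hw s hs
    have hz : (∑ k, w k * (ζ i k : ℝ)) = 0 := by
      have := hARle hζAR
      rw [LinearMap.mem_ker, hφapply] at this
      exact this
    have hui : u i = t * ∑ k, w k * (ζ i k : ℝ) := by
      rw [hu, Finset.mul_sum]
      simp only [Matrix.mulVec, dotProduct, Matrix.transpose_apply, hRmat,
        Matrix.of_apply]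
      exact Finset.sum_congr rfl fun k _ => by ring
    rw [hui, hz, mul_zero]
  have hsum : ∀ k, t * w k
      = ∑ j : {j : Fin n // r ≤ (j : ℕ)}, u (j : Fin n) * η (j : Fin n) k := by
    intro k
    rw [hdecomp k]
    have h1 : ∑ j : Fin n, u j * η j k
        = ∑ j ∈ Finset.univ.filter (fun j : Fin n => r ≤ (j : ℕ)), u j * η j k := by
      refine (Finset.sum_subset (Finset.filter_subset _ _) ?_).symm
      intro x _ hx
      have hxr : (x : ℕ) < r := by
        simp only [Finset.mem_filter, Finset.mem_univ, true_and] at hx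
        omega
      rw [hker x hxr, zero_mul]
    rw [h1, Finset.sum_subtype (p := fun j : Fin n => r ≤ (j : ℕ)) _ (by simp) (fun j : Fin n => u j * η j k)]
  -- the function g
  set g : ({j : Fin n // r ≤ (j : ℕ)} → ℝ) → ℝ := fun θ =>
    H (fun k => Complex.exp (Complex.I *
      Complex.ofReal (∑ j : {j : Fin n // r ≤ (j : ℕ)}, θ j * η (j : Fin n) k)) * v k)
    with hg
  have hgc : Continuous g := by
    apply hH.comp
    refine continuous_pi fun k => (Continuous.mul ?_ continuous_const)
    refine Complex.continuous_exp.comp ?_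
    exact continuous_const.mul (Complex.continuous_ofReal.comp
      (continuous_finset_sum _ fun j _ => (continuous_apply j).mul continuous_const))
  -- periodicity of g
  have hper : ∀ (θ : {j : Fin n // r ≤ (j : ℕ)} → ℝ) (z : {j : Fin n // r ≤ (j : ℕ)} → ℤ),
      g (fun j => θ j + (z j : ℝ) * T) = g θ := by
    intro θ z
    simp only [hg]
    refine congrArg H (funext fun k => ?_)
    have h2 : (∑ j : {j : Fin n // r ≤ (j : ℕ)}, (θ j + (z j : ℝ) * T) * η (j : Fin n) k)
        = (∑ j : {j : Fin n // r ≤ (j : ℕ)}, θ j * η (j : Fin n) k)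
          + ((∑ j : {j : Fin n // r ≤ (j : ℕ)}, z j * N (j : Fin n) k : ℤ) : ℝ) * T := by
      push_cast
      rw [Finset.sum_mul, ← Finset.sum_add_distrib]
      refine Finset.sum_congr rfl fun j _ => ?_
      rw [hηZ (j : Fin n) k]
      ring
    rw [h2]
    have h3 : Complex.I * Complex.ofReal ((∑ j : {j : Fin n // r ≤ (j : ℕ)},
          θ j * η (j : Fin n) k)
          + ((∑ j : {j : Fin n // r ≤ (j : ℕ)}, z j * N (j : Fin n) k : ℤ) : ℝ) * T)
        = Complex.I * Complex.ofReal (∑ j : {j : Fin n // r ≤ (j : ℕ)}, θ j * η (j : Fin n) k)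
          + ((∑ j : {j : Fin n // r ≤ (j : ℕ)}, z j * N (j : Fin n) k : ℤ) : ℂ)
            * (2 * (Real.pi : ℂ) * Complex.I) := by
      rw [hT]; push_cast; ring
    rw [h3, Complex.exp_add, Complex.exp_int_mul_two_pi_mul_I, mul_one]
  -- descend to the torus
  set G : ({j : Fin n // r ≤ (j : ℕ)} → AddCircle T) → ℝ := fun x =>
    g (fun j => ((AddCircle.equivIoc T 0 (x j) : Set.Ioc (0:ℝ) (0 + T)) : ℝ)) with hG
  have hGmeas : Measurable G := by
    apply hgc.measurable.comp
    refine measurable_pi_lambda _ fun j => ?_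
    exact measurable_subtype_coe.comp
      ((AddCircle.measurableEquivIoc T 0).measurable.comp (measurable_pi_apply j))
  have hGcoe : ∀ θ : {j : Fin n // r ≤ (j : ℕ)} → ℝ,
      G (fun j => ((θ j : ℝ) : AddCircle T)) = g θ := by
    intro θ
    simp only [hG]
    have h1 : (fun j : {j : Fin n // r ≤ (j : ℕ)} =>
          ((AddCircle.equivIoc T 0 ((θ j : ℝ) : AddCircle T) : Set.Ioc (0:ℝ) (0 + T)) : ℝ))
        = fun j => θ j + ((-(toIocDiv hTpos 0 (θ j)) : ℤ) : ℝ) * T := by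
      funext j
      have h2 : ((AddCircle.equivIoc T 0 ((θ j : ℝ) : AddCircle T) : Set.Ioc (0:ℝ) (0 + T)) : ℝ)
          = toIocMod hTpos 0 (θ j) := by
        simp [AddCircle.equivIoc, QuotientAddGroup.equivIocMod_coe]
      rw [h2]
      have h4 := toIocMod_sub_self hTpos 0 (θ j)
      have h5 : toIocMod hTpos 0 (θ j) = -toIocDiv hTpos 0 (θ j) • T + θ j :=
        eq_add_of_sub_eq h4
      rw [h5, zsmul_eq_mul]
      push_cast
      ring
    rw [h1]
    exact hper θ _
  -- measure preserving map to the torus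
  have hmp : MeasurePreserving
      (fun (θ : {j : Fin n // r ≤ (j : ℕ)} → ℝ) j => ((θ j : ℝ) : AddCircle T))
      (Measure.pi fun _ => volume.restrict (Set.Ioc (0:ℝ) (0 + T)))
      (Measure.pi fun _ => (volume : Measure (AddCircle T))) :=
    auxMeasurePreservingPi _ _ _ fun _ => AddCircle.measurePreserving_mk T 0
  -- transfer integrals to the torus
  have hmap : ∀ F : ({j : Fin n // r ≤ (j : ℕ)} → AddCircle T) → ℝ, Measurable F →
      (∫ θ, F (fun j => ((θ j : ℝ) : AddCircle T))
          ∂(Measure.pi fun _ => volume.restrict (Set.Ioc (0:ℝ) (0 + T))))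
        = ∫ x, F x ∂(Measure.pi fun _ => (volume : Measure (AddCircle T))) := by
    intro F hF
    rw [← hmp.map_eq, integral_map hmp.aemeasurable hF.aestronglyMeasurable]
  -- the cube identifications
  have hres : (volume : Measure ({j : Fin n // r ≤ (j : ℕ)} → ℝ)).restrict
        (Set.univ.pi fun _ => Set.Ioc (0:ℝ) (0 + T))
      = Measure.pi fun _ => volume.restrict (Set.Ioc (0:ℝ) (0 + T)) := by
    rw [MeasureTheory.volume_pi]
    exact auxRestrictPi _ _ fun _ => measurableSet_Ioc
  have haeset : (Set.univ.pi fun _ : {j : Fin n // r ≤ (j : ℕ)} => Set.Icc (0:ℝ) T)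
      =ᵐ[(volume : Measure ({j : Fin n // r ≤ (j : ℕ)} → ℝ))]
        (Set.univ.pi fun _ => Set.Ioc (0:ℝ) (0 + T)) := by
    rw [← measure_symmDiff_eq_zero_iff]
    have hsub : (Set.univ.pi fun _ : {j : Fin n // r ≤ (j : ℕ)} => Set.Ioc (0:ℝ) (0 + T))
        ⊆ Set.univ.pi fun _ => Set.Icc (0:ℝ) T := by
      intro x hx j hj
      have h := hx j hj
      rw [zero_add] at h
      exact Set.Ioc_subset_Icc_self h
    rw [symmDiff_of_ge hsub]
    refine measure_mono_null (t := ⋃ j : {j : Fin n // r ≤ (j : ℕ)}, {x | x j = 0}) ?_ ?_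
    · rintro x ⟨hx1, hx2⟩
      rw [Set.mem_pi] at hx2
      push_neg at hx2
      obtain ⟨j, _, hj⟩ := hx2
      have hxj := hx1 j (Set.mem_univ j)
      rw [zero_add] at hj
      have : x j = 0 := by
        by_contra hne
        exact hj ⟨lt_of_le_of_ne hxj.1 (Ne.symm hne), hxj.2⟩
      exact Set.mem_iUnion.mpr ⟨j, this⟩
    · refine measure_iUnion_null fun j => ?_
      rw [MeasureTheory.volume_pi]
      exact Measure.pi_hyperplane _ j 0
  -- key translation invariance
  have key : ∀ c : {j : Fin n // r ≤ (j : ℕ)} → ℝ,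
      (∫ θ in Set.univ.pi (fun _ : {j : Fin n // r ≤ (j : ℕ)} => Set.Icc (0:ℝ) T), g (θ + c))
        = ∫ θ in Set.univ.pi (fun _ : {j : Fin n // r ≤ (j : ℕ)} => Set.Icc (0:ℝ) T), g θ := by
    intro c
    set cbar : {j : Fin n // r ≤ (j : ℕ)} → AddCircle T := fun j => ((c j : ℝ) : AddCircle T)
      with hcbar
    have hFmeas : Measurable fun x : {j : Fin n // r ≤ (j : ℕ)} → AddCircle T => G (x + cbar) :=
      hGmeas.comp (measurable_add_const cbar)
    have hptw : ∀ θ : {j : Fin n // r ≤ (j : ℕ)} → ℝ,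
        G ((fun j => ((θ j : ℝ) : AddCircle T)) + cbar) = g (θ + c) := by
      intro θ
      have h1 : ((fun j : {j : Fin n // r ≤ (j : ℕ)} => ((θ j : ℝ) : AddCircle T)) + cbar)
          = fun j => (((θ j + c j : ℝ)) : AddCircle T) := by
        funext j
        simp [hcbar]
      rw [h1]
      exact hGcoe (θ + c)
    calc (∫ θ in Set.univ.pi (fun _ : {j : Fin n // r ≤ (j : ℕ)} => Set.Icc (0:ℝ) T), g (θ + c))
        = ∫ θ in Set.univ.pi (fun _ : {j : Fin n // r ≤ (j : ℕ)} => Set.Ioc (0:ℝ) (0 + T)),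
            g (θ + c) := setIntegral_congr_set haeset
      _ = ∫ θ, g (θ + c) ∂(Measure.pi fun _ => volume.restrict (Set.Ioc (0:ℝ) (0 + T))) := by
          rw [← hres]
      _ = ∫ θ, (fun x => G (x + cbar)) (fun j => ((θ j : ℝ) : AddCircle T))
            ∂(Measure.pi fun _ => volume.restrict (Set.Ioc (0:ℝ) (0 + T))) := by
          refine integral_congr_ae (Filter.Eventually.of_forall fun θ => ?_)
          exact (hptw θ).symm
      _ = ∫ x, G (x + cbar) ∂(Measure.pi fun _ => (volume : Measure (AddCircle T))) :=
          hmap _ hFmeas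
      _ = ∫ x, G (cbar + x) ∂(Measure.pi fun _ => (volume : Measure (AddCircle T))) := by
          refine integral_congr_ae (Filter.Eventually.of_forall fun x => ?_)
          show G (x + cbar) = G (cbar + x)
          rw [add_comm]
      _ = ∫ x, G x ∂(Measure.pi fun _ => (volume : Measure (AddCircle T))) :=
          integral_add_left_eq_self G cbar
      _ = ∫ θ, G (fun j => ((θ j : ℝ) : AddCircle T))
            ∂(Measure.pi fun _ => volume.restrict (Set.Ioc (0:ℝ) (0 + T))) := (hmap G hGmeas).symm
      _ = ∫ θ, g θ ∂(Measure.pi fun _ => volume.restrict (Set.Ioc (0:ℝ) (0 + T))) := by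
          refine integral_congr_ae (Filter.Eventually.of_forall fun θ => ?_)
          exact hGcoe θ
      _ = ∫ θ in Set.univ.pi (fun _ : {j : Fin n // r ≤ (j : ℕ)} => Set.Ioc (0:ℝ) (0 + T)),
            g θ := by rw [← hres]
      _ = ∫ θ in Set.univ.pi (fun _ : {j : Fin n // r ≤ (j : ℕ)} => Set.Icc (0:ℝ) T), g θ :=
          (setIntegral_congr_set haeset).symm
  -- assemble
  rw [hHres (Ψ (fun k => t * w k) v), hHres v]
  congr 1
  have hintR : (fun θ : {j : Fin n // r ≤ (j : ℕ)} → ℝ =>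
      H (Ψ (fun k => ∑ j : {j : Fin n // r ≤ (j : ℕ)}, θ j * η (j : Fin n) k) v)) = g := by
    funext θ
    simp only [hg]
    exact congrArg H (funext fun k => hΨ _ v k)
  have hintL : (fun θ : {j : Fin n // r ≤ (j : ℕ)} → ℝ =>
      H (Ψ (fun k => ∑ j : {j : Fin n // r ≤ (j : ℕ)}, θ j * η (j : Fin n) k)
        (Ψ (fun k => t * w k) v)))
      = fun θ => g (θ + (fun j : {j : Fin n // r ≤ (j : ℕ)} => u (j : Fin n))) := by
    funext θ
    simp only [hg, Pi.add_apply]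
    refine congrArg H (funext fun k => ?_)
    rw [hΨ _ _ k, hΨ _ v k]
    rw [← mul_assoc, ← Complex.exp_add]
    congr 1
    have h6 : (∑ j : {j : Fin n // r ≤ (j : ℕ)}, θ j * η (j : Fin n) k) + t * w k
        = ∑ j : {j : Fin n // r ≤ (j : ℕ)},
            (θ j + u (j : Fin n)) * η (j : Fin n) k := by
      rw [hsum k, ← Finset.sum_add_distrib]
      refine Finset.sum_congr rfl fun j _ => ?_
      ring
    rw [← h6]
    push_cast
    ring
  rw [hintR, hintL]
  exact key _
end

section
/- Let Λ : ℕ → ℝ, let m ∈ ℕ, and let v : ℕ → ℂ. Let 𝒞 be the set of triples c = (p,q,l) of finitely supported functions ℕ → ℕ with supp q ∩ supp l = ∅ and |q| + |l| ≤ m (where |q| = Σ_k q_k), and for c ∈ 𝒞 set M_c(v) = ∏_k |v_k|^{2p_k} v_k^{q_k} (conj v_k)^{l_k}. Let (C_c)_{c∈𝒞} be complex numbers with Σ_{c∈𝒞} |C_c| |M_c(v)| < ∞. For t ∈ ℝ let Ψ_{tΛ}v = (e^{itΛ_k} v_k)_k; then M_c(Ψ_{tΛ}v) = e^{it (q−l)·Λ}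 M_c(v), the series F(t) = Σ_{c∈𝒞} C_c M_c(Ψ_{tΛ}v) converges absolutely for every t, and lim_{T→∞} (1/T) ∫₀^T F(t) dt = Σ_{c∈𝒞, (q−l)·Λ = 0} C_c M_c(v), where (q−l)·Λ = Σ_k (q_k − l_k) Λ_k. -/
/-!
Each monomial is an eigenfunction of the flow: rotating every coordinate `v_k` by the phase
`e^{itΛ_k}` leaves the actions `|v_k|²` unchanged and multiplies `M_c(v)` by `e^{itω_c}` with
`ω_c = (q - l)·Λ`, so `F` is an absolutely convergent trigonometric series
`F(t) = Σ_c e^{itω_c} C_c M_c(v)`. Since `|e^{itω}| = 1`, integration over `[0, T]` commutes with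
the sum, and the time average of `e^{itω}` is bounded by `1` and tends to `1` if `ω = 0` and to `0`
otherwise (it is `O(1/(|ω| T))`). Dominated convergence for the series finishes the proof.
-/

open scoped BigOperators Classical
open Filter Topology Complex MeasureTheory

theorem Finsupp.prod_exp_I_mul_mul_pow {ι : Type*} (q : ι →₀ ℕ) (θ : ι → ℝ) (w : ι → ℂ) :
    (q.prod fun k e => (exp (I * θ k) * w k) ^ e) =
      exp (I * ↑(q.sum fun k e => (e : ℝ) * θ k)) * q.prod fun k e => w k ^ e := by
  simp_rw [mul_pow, ← exp_nat_mul]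
  rw [Finsupp.prod_mul, Finsupp.prod, Finsupp.sum, ← exp_sum]
  push_cast
  rw [Finset.mul_sum]
  exact congrArg₂ _ (congrArg _ (Finset.sum_congr rfl fun k _ => by ring)) rfl

namespace ResonantAveraging

variable {ι : Type*}

noncomputable def monomial (c : (ι →₀ ℕ) × (ι →₀ ℕ) × (ι →₀ ℕ)) (w : ι → ℂ) : ℂ :=
  (c.1.prod fun k e => ((‖w k‖ : ℝ) : ℂ) ^ (2 * e)) *
    (c.2.1.prod fun k e => (w k) ^ e) *
    (c.2.2.prod fun k e => (starRingEnd ℂ (w k)) ^ e)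

noncomputable def rotate (Λ : ι → ℝ) (t : ℝ) (w : ι → ℂ) : ι → ℂ :=
  fun k => exp (I * ↑(t * Λ k)) * w k

def frequency (Λ : ι → ℝ) (c : (ι →₀ ℕ) × (ι →₀ ℕ) × (ι →₀ ℕ)) : ℝ :=
  (c.2.1.sum fun k e => (e : ℝ) * Λ k) - (c.2.2.sum fun k e => (e : ℝ) * Λ k)

theorem monomial_rotate (Λ : ι → ℝ) (t : ℝ) (w : ι → ℂ)
    (c : (ι →₀ ℕ) × (ι →₀ ℕ) × (ι →₀ ℕ)) :
    monomial c (rotate Λ t w) = exp (I * ↑(t * frequency Λ c)) * monomial c w := by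
  obtain ⟨p, q, l⟩ := c
  have hnorm : ∀ k, ‖rotate Λ t w k‖ = ‖w k‖ := fun k => by
    rw [rotate, norm_mul, norm_exp_I_mul_ofReal, one_mul]
  have hconj : ∀ k, starRingEnd ℂ (rotate Λ t w k) =
      exp (I * ↑(-t * Λ k)) * starRingEnd ℂ (w k) := fun k => by
    rw [rotate, map_mul, ← exp_conj]
    simp
  have hsum : ∀ (r : ι →₀ ℕ) (s : ℝ),
      (r.sum fun k e => (e : ℝ) * (s * Λ k)) = s * r.sum fun k e => (e : ℝ) * Λ k := by
    intro r s
    rw [Finsupp.mul_sum]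
    exact Finsupp.sum_congr fun k _ => by ring
  simp only [monomial, hnorm, hconj]
  simp only [rotate]
  rw [Finsupp.prod_exp_I_mul_mul_pow, Finsupp.prod_exp_I_mul_mul_pow, hsum, hsum, frequency]
  have hexp : ∀ a b : ℝ, exp (I * ↑(t * (a - b))) = exp (I * ↑(t * a)) * exp (I * ↑(-t * b)) :=
    fun a b => by rw [← exp_add]; push_cast; ring_nf
  rw [hexp]
  ring

end ResonantAveraging

noncomputable def phaseMean (ω T : ℝ) : ℂ :=
  (1 / T : ℂ) * ∫ t in (0 : ℝ)..T, exp (I * ↑(t * ω))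

theorem norm_phaseMean_le_one (ω : ℝ) {T : ℝ} (hT : 0 < T) : ‖phaseMean ω T‖ ≤ 1 := by
  have hint : ‖∫ t in (0 : ℝ)..T, exp (I * ↑(t * ω))‖ ≤ 1 * |T - 0| :=
    intervalIntegral.norm_integral_le_of_norm_le_const fun t _ => (norm_exp_I_mul_ofReal _).le
  rw [phaseMean, norm_mul, one_div, norm_inv, norm_real, Real.norm_of_nonneg hT.le]
  rw [one_mul, sub_zero, abs_of_pos hT] at hint
  exact inv_mul_le_one_of_le₀ hint hT.le

theorem phaseMean_zero {T : ℝ} (hT : T ≠ 0) : phaseMean 0 T = 1 := by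
  simp [phaseMean, hT]

theorem norm_phaseMean_le {ω T : ℝ} (hω : ω ≠ 0) (hT : 0 < T) :
    ‖phaseMean ω T‖ ≤ 2 / |ω| * T⁻¹ := by
  have hIω : I * ω ≠ 0 := mul_ne_zero I_ne_zero (ofReal_ne_zero.mpr hω)
  have hint : ∫ t in (0 : ℝ)..T, exp (I * ↑(t * ω)) = (exp (I * ↑(ω * T)) - 1) / (I * ω) := by
    simp_rw [ofReal_mul, ← mul_assoc, mul_right_comm I, integral_exp_mul_complex hIω]
    simp
  have hnum : ‖exp (I * ↑(ω * T)) - 1‖ ≤ 2 :=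
    (norm_sub_le _ _).trans (by rw [norm_exp_I_mul_ofReal, norm_one]; norm_num)
  rw [phaseMean, hint, norm_mul, norm_div, norm_div, norm_mul, norm_I, one_mul, norm_one, norm_real,
    norm_real, Real.norm_eq_abs, Real.norm_eq_abs, abs_of_pos hT, one_div, mul_comm]
  gcongr

theorem tendsto_phaseMean (ω : ℝ) :
    Tendsto (phaseMean ω) atTop (𝓝 (if ω = 0 then 1 else 0)) := by
  split_ifs with hω
  · subst hω
    exact tendsto_const_nhds.congr' <|
      (eventually_ne_atTop 0).mono fun T hT => (phaseMean_zero hT).symm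
  · refine squeeze_zero_norm' ?_ (by simpa using tendsto_inv_atTop_zero.const_mul (2 / |ω|))
    filter_upwards [eventually_gt_atTop 0] with T hT using norm_phaseMean_le hω hT

section Averaging

variable {ι : Type*} [Countable ι] {a : ι → ℂ} (ω : ι → ℝ)

theorem intervalIntegral_tsum_exp_I_mul (ha : Summable fun i => ‖a i‖) (T : ℝ) :
    ∫ t in (0 : ℝ)..T, ∑' i, exp (I * ↑(t * ω i)) * a i =
      ∑' i, (∫ t in (0 : ℝ)..T, exp (I * ↑(t * ω i))) * a i := by
  have hnorm : ∀ i t, ‖exp (I * ↑(t * ω i)) * a i‖ = ‖a i‖ := fun i t => by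
    rw [norm_mul, norm_exp_I_mul_ofReal, one_mul]
  simp_rw [← intervalIntegral.integral_mul_const]
  refine (intervalIntegral.hasSum_integral_of_dominated_convergence (fun i _ => ‖a i‖)
    (fun i => (by fun_prop : Continuous _).aestronglyMeasurable)
    (fun i => ae_of_all _ fun t _ => (hnorm i t).le) (ae_of_all _ fun _ _ => ha)
    intervalIntegrable_const
    (ae_of_all _ fun t _ => ?_)).tsum_eq.symm
  exact (Summable.of_norm (by simpa only [hnorm] using ha)).hasSum

theorem tendsto_average_tsum_exp_I_mul (ha : Summable fun i => ‖a i‖) :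
    Tendsto (fun T : ℝ => (1 / T : ℂ) * ∫ t in (0 : ℝ)..T, ∑' i, exp (I * ↑(t * ω i)) * a i)
      atTop (𝓝 (∑' i, if ω i = 0 then a i else 0)) := by
  simp_rw [intervalIntegral_tsum_exp_I_mul ω ha, ← tsum_mul_left, ← mul_assoc, ← phaseMean.eq_1]
  refine tendsto_tsum_of_dominated_convergence ha (fun i => ?_) ?_
  · simpa only [ite_mul, one_mul, zero_mul] using (tendsto_phaseMean (ω i)).mul_const (a i)
  · filter_upwards [eventually_gt_atTop 0] with T hT i
    rw [norm_mul]
    exact mul_le_of_le_one_left (norm_nonneg _) (norm_phaseMean_le_one _ hT)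

end Averaging

theorem statement19_general (Λ : ℕ → ℝ) (v : ℕ → ℂ)
    (C : Set ((ℕ →₀ ℕ) × (ℕ →₀ ℕ) × (ℕ →₀ ℕ)))
    (M : ((ℕ →₀ ℕ) × (ℕ →₀ ℕ) × (ℕ →₀ ℕ)) → (ℕ → ℂ) → ℂ)
    (hM : ∀ c w, M c w =
        (c.1.prod fun k e => ((‖w k‖ : ℝ) : ℂ) ^ (2 * e)) *
        (c.2.1.prod fun k e => (w k) ^ e) *
        (c.2.2.prod fun k e => (starRingEnd ℂ (w k)) ^ e))
    (coef : C → ℂ)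
    (hsum : Summable fun c : C => ‖coef c‖ * ‖M c.1 v‖)
    (Ψ : ℝ → (ℕ → ℂ) → (ℕ → ℂ))
    (hΨ : ∀ (t : ℝ) (w : ℕ → ℂ) (k : ℕ),
        Ψ t w k = Complex.exp (Complex.I * Complex.ofReal (t * Λ k)) * w k)
    (dotΛ : ((ℕ →₀ ℕ) × (ℕ →₀ ℕ) × (ℕ →₀ ℕ)) → ℝ)
    (hdot : ∀ c, dotΛ c =
        (c.2.1.sum fun k e => (e : ℝ) * Λ k) - (c.2.2.sum fun k e => (e : ℝ) * Λ k)) :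
    (∀ (t : ℝ) (c : C),
        M c.1 (Ψ t v) = Complex.exp (Complex.I * Complex.ofReal (t * dotΛ c.1)) * M c.1 v) ∧
    (∀ t : ℝ, Summable fun c : C => ‖coef c * M c.1 (Ψ t v)‖) ∧
    Tendsto (fun T : ℝ => (1 / T : ℂ) * ∫ t in (0:ℝ)..T, ∑' c : C, coef c * M c.1 (Ψ t v))
      atTop (𝓝 (∑' c : C, if dotΛ c.1 = 0 then coef c * M c.1 v else 0)) := by
  have hrot : ∀ (t : ℝ) (c : C), M c.1 (Ψ t v) = exp (I * ↑(t * dotΛ c.1)) * M c.1 v := by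
    obtain rfl : M = ResonantAveraging.monomial := funext fun c => funext (hM c)
    obtain rfl : Ψ = ResonantAveraging.rotate Λ := funext fun t => funext fun w => funext (hΨ t w)
    obtain rfl : dotΛ = ResonantAveraging.frequency Λ := funext hdot
    exact fun t c => ResonantAveraging.monomial_rotate Λ t v c.1
  have hnorm (t : ℝ) (c : C) : ‖coef c * M c.1 (Ψ t v)‖ = ‖coef c‖ * ‖M c.1 v‖ := by
    rw [hrot, norm_mul, norm_mul, norm_exp_I_mul_ofReal, one_mul]
  refine ⟨hrot, fun t => by simpa only [hnorm t] using hsum, ?_⟩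
  simp_rw [hrot, mul_left_comm (coef _)]
  exact tendsto_average_tsum_exp_I_mul _ (by simpa only [norm_mul] using hsum)

/-- Resonant averaging for normally convergent series of monomials.  With
`M_c(v) = Π_k |v_k|^{2p_k} v_k^{q_k} (conj v_k)^{l_k}` for triples `c = (p,q,l)` of finitely
supported multi-indices with disjoint supports of `q, l` and `|q| + |l| ≤ m`, and
`Ψ_{tΛ}v = (e^{itΛ_k} v_k)_k`: one has `M_c(Ψ_{tΛ}v) = e^{it(q−l)·Λ} M_c(v)`, the series
`F(t) = Σ_c C_c M_c(Ψ_{tΛ}v)` converges absolutely for every `t`, and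
`(1/T)∫₀^T F(t) dt → Σ_{(q−l)·Λ = 0} C_c M_c(v)` as `T → ∞`. -/
theorem statement19 (Λ : ℕ → ℝ) (m : ℕ) (v : ℕ → ℂ)
    (C : Set ((ℕ →₀ ℕ) × (ℕ →₀ ℕ) × (ℕ →₀ ℕ)))
    (hC : C = {c | Disjoint c.2.1.support c.2.2.support ∧
        (c.2.1.sum fun _ e => e) + (c.2.2.sum fun _ e => e) ≤ m})
    (M : ((ℕ →₀ ℕ) × (ℕ →₀ ℕ) × (ℕ →₀ ℕ)) → (ℕ → ℂ) → ℂ)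
    (hM : ∀ c w, M c w =
        (c.1.prod fun k e => ((‖w k‖ : ℝ) : ℂ) ^ (2 * e)) *
        (c.2.1.prod fun k e => (w k) ^ e) *
        (c.2.2.prod fun k e => (starRingEnd ℂ (w k)) ^ e))
    (coef : C → ℂ)
    (hsum : Summable fun c : C => ‖coef c‖ * ‖M c.1 v‖)
    (Ψ : ℝ → (ℕ → ℂ) → (ℕ → ℂ))
    (hΨ : ∀ (t : ℝ) (w : ℕ → ℂ) (k : ℕ),
        Ψ t w k = Complex.exp (Complex.I * Complex.ofReal (t * Λ k)) * w k)
    (dotΛ : ((ℕ →₀ ℕ) × (ℕ →₀ ℕ) × (ℕ →₀ ℕ)) → ℝ)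
    (hdot : ∀ c, dotΛ c =
        (c.2.1.sum fun k e => (e : ℝ) * Λ k) - (c.2.2.sum fun k e => (e : ℝ) * Λ k)) :
    (∀ (t : ℝ) (c : C),
        M c.1 (Ψ t v) = Complex.exp (Complex.I * Complex.ofReal (t * dotΛ c.1)) * M c.1 v) ∧
    (∀ t : ℝ, Summable fun c : C => ‖coef c * M c.1 (Ψ t v)‖) ∧
    Tendsto (fun T : ℝ => (1 / T : ℂ) * ∫ t in (0:ℝ)..T, ∑' c : C, coef c * M c.1 (Ψ t v))
      atTop (𝓝 (∑' c : C, if dotΛ c.1 = 0 then coef c * M c.1 v else 0)) :=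
  statement19_general Λ v C M hM coef hsum Ψ hΨ dotΛ hdot
end
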